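/- arXiv:1109.5926 — 2 statements merged into one kernel-verified Lean document; each statement's English description precedes it below -/
import Mathlib

section
/- Let d be a semistable multidegree on C of total degree g − 1 and let Z ⊆ V be a nonempty proper subset, with complement Z' = V \ Z, such that d_Z ≥ g_Z + k_Z − 1. Then Z is connected (n_Z = 1), d_Z = g_Z + k_Z − 1, and d_{Z'} = g_{Z'} − n_{Z'}. (The numerical core of Proposition 3.4 of the paper, stated via the dual graph.) -/
open Finset

/-- The dual graph of a nodal curve: vertices index the irreducible components,
`i` and `j` are adjacent iff `i ≠ j` and the components meet in at least one node. -/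
def dualGraph {V : Type*} (k : V → V → ℕ) : SimpleGraph V :=
  SimpleGraph.fromRel (fun i j => 0 < k i j)

/-- The number of connected components of the subgraph of the dual graph induced on `S`,
i.e. the number of connected components of the subcurve determined by `S`. -/
noncomputable def nComp {V : Type*} (k : V → V → ℕ) (S : Finset V) : ℕ :=
  Nat.card ((dualGraph k).induce (S : Set V)).ConnectedComponent

/-- The (arithmetic) genus of the subcurve determined by `S`:
`g_S = Σ_{i∈S} g i + (1/2)·Σ_{i∈S} Σ_{j∈S} k i j − |S| + n_S`. -/
noncomputable def genusOf {V : Type*} [DecidableEq V] (g : V → ℕ) (k : V → V → ℕ)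
    (S : Finset V) : ℤ :=
  (∑ i ∈ S, (g i : ℤ)) + (∑ i ∈ S, ∑ j ∈ S, (k i j : ℤ)) / 2 - S.card + nComp k S

lemma even_ksum {V : Type*} [DecidableEq V] (k : V → V → ℕ)
    (hsymm : ∀ i j, k i j = k j i) (hdiag : ∀ i, k i i = 0) (S : Finset V) :
    (2 : ℤ) ∣ ∑ i ∈ S, ∑ j ∈ S, (k i j : ℤ) := by
  classical
  induction S using Finset.induction_on with
  | empty => simp
  | @insert a S ha ih =>
    rw [Finset.sum_insert ha]
    rw [Finset.sum_insert ha]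
    have h1 : ∑ i ∈ S, ∑ j ∈ insert a S, (k i j : ℤ)
        = ∑ i ∈ S, ((k i a : ℤ) + ∑ j ∈ S, (k i j : ℤ)) := by
      apply Finset.sum_congr rfl
      intro i _
      rw [Finset.sum_insert ha]
    rw [h1, Finset.sum_add_distrib]
    have h2 : ∑ i ∈ S, (k i a : ℤ) = ∑ j ∈ S, (k a j : ℤ) := by
      apply Finset.sum_congr rfl
      intro i _
      rw [hsymm]
    rw [h2, hdiag a]
    push_cast
    obtain ⟨c, hc⟩ := ih
    exact ⟨∑ j ∈ S, (k a j : ℤ) + c, by rw [hc]; ring⟩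

lemma nComp_pos {V : Type*} [Fintype V] (k : V → V → ℕ) (S : Finset V)
    (hS : S.Nonempty) : 1 ≤ nComp k S := by
  obtain ⟨v, hv⟩ := hS
  haveI : Nonempty ((dualGraph k).induce (S : Set V)).ConnectedComponent :=
    ⟨((dualGraph k).induce (S : Set V)).connectedComponentMk ⟨v, hv⟩⟩
  exact Nat.card_pos

/-- The numerical core of Proposition 3.4: if `d` is a semistable multidegree of total degree
`g − 1` and `Z` is a nonempty proper subcurve with `d_Z ≥ g_Z + k_Z − 1`, then `Z` is
connected, `d_Z = g_Z + k_Z − 1`, and `d_{Z'} = g_{Z'} − n_{Z'}`. -/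
theorem connected_of_semistable_large_degree
    {V : Type*} [Fintype V] [DecidableEq V] [Nonempty V]
    (g : V → ℕ) (k : V → V → ℕ)
    (hsymm : ∀ i j, k i j = k j i) (hdiag : ∀ i, k i i = 0)
    (hconn : (dualGraph k).Connected)
    (d : V → ℤ)
    (hd_total : ∑ i, d i = genusOf g k Finset.univ - 1)
    (hd_ss : ∀ S : Finset V, S.Nonempty → S ≠ Finset.univ →
      (∑ i ∈ S, d i) ≥ genusOf g k S - nComp k S)
    (Z : Finset V) (hZne : Z.Nonempty) (hZproper : Z ≠ Finset.univ)
    (hdZ : (∑ i ∈ Z, d i) ≥ genusOf g k Z + (∑ i ∈ Z, ∑ j ∈ Zᶜ, (k i j : ℤ)) - 1) :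
    nComp k Z = 1 ∧
      (∑ i ∈ Z, d i) = genusOf g k Z + (∑ i ∈ Z, ∑ j ∈ Zᶜ, (k i j : ℤ)) - 1 ∧
      (∑ i ∈ Zᶜ, d i) = genusOf g k Zᶜ - nComp k Zᶜ := by
  classical
  -- complement facts
  have hZc_ne : Zᶜ.Nonempty := by
    rw [← Finset.compl_ne_univ_iff_nonempty, compl_compl]
    exact hZproper
  have hZc_proper : Zᶜ ≠ Finset.univ :=
    (Finset.compl_ne_univ_iff_nonempty Z).mpr hZne
  -- nComp univ = 1
  have hnV : nComp k Finset.univ = 1 := by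
    have hiso : ((dualGraph k).induce ((Finset.univ : Finset V) : Set V)) ≃g (dualGraph k) := by
      rw [Finset.coe_univ]
      exact SimpleGraph.induceUnivIso (dualGraph k)
    haveI : Subsingleton ((dualGraph k).induce
        ((Finset.univ : Finset V) : Set V)).ConnectedComponent := by
      haveI := hconn.preconnected.subsingleton_connectedComponent
      exact hiso.connectedComponentEquiv.subsingleton
    haveI : Nonempty ((dualGraph k).induce
        ((Finset.univ : Finset V) : Set V)).ConnectedComponent :=
      ⟨((dualGraph k).induce _).connectedComponentMk
        ⟨Classical.arbitrary V, by simp⟩⟩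
    exact Nat.card_eq_one_iff_unique.mpr ⟨‹_›, ‹_›⟩
  -- splitting identities
  have hsplit_g : (∑ i, (g i : ℤ)) = (∑ i ∈ Z, (g i : ℤ)) + ∑ i ∈ Zᶜ, (g i : ℤ) :=
    (Finset.sum_add_sum_compl Z _).symm
  have hsplit_d : (∑ i, d i) = (∑ i ∈ Z, d i) + ∑ i ∈ Zᶜ, d i :=
    (Finset.sum_add_sum_compl Z _).symm
  have hcard : ((Finset.univ : Finset V).card : ℤ) = Z.card + Zᶜ.card := by
    rw [Finset.card_compl, Finset.card_univ]
    have := Finset.card_le_univ Z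
    omega
  have hKsymm : (∑ i ∈ Zᶜ, ∑ j ∈ Z, (k i j : ℤ)) = ∑ i ∈ Z, ∑ j ∈ Zᶜ, (k i j : ℤ) := by
    rw [Finset.sum_comm]
    apply Finset.sum_congr rfl
    intro i _
    apply Finset.sum_congr rfl
    intro j _
    rw [hsymm]
  have hsplit_k : (∑ i, ∑ j, (k i j : ℤ))
      = (∑ i ∈ Z, ∑ j ∈ Z, (k i j : ℤ)) + (∑ i ∈ Zᶜ, ∑ j ∈ Zᶜ, (k i j : ℤ))
        + 2 * ∑ i ∈ Z, ∑ j ∈ Zᶜ, (k i j : ℤ) := by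
    have h1 : ∀ T : Finset V, (∑ i ∈ T, ∑ j, (k i j : ℤ))
        = (∑ i ∈ T, ∑ j ∈ Z, (k i j : ℤ)) + ∑ i ∈ T, ∑ j ∈ Zᶜ, (k i j : ℤ) := by
      intro T
      rw [← Finset.sum_add_distrib]
      exact Finset.sum_congr rfl fun i _ => (Finset.sum_add_sum_compl Z _).symm
    calc (∑ i, ∑ j, (k i j : ℤ))
        = (∑ i ∈ Z, ∑ j, (k i j : ℤ)) + ∑ i ∈ Zᶜ, ∑ j, (k i j : ℤ) :=
          (Finset.sum_add_sum_compl Z _).symm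
      _ = _ := by rw [h1 Z, h1 Zᶜ, hKsymm]; ring
  -- evenness
  obtain ⟨a, ha⟩ := even_ksum k hsymm hdiag Z
  obtain ⟨b, hb⟩ := even_ksum k hsymm hdiag Zᶜ
  -- unfold genus
  have hgu : genusOf g k Finset.univ
      = genusOf g k Z + genusOf g k Zᶜ + (∑ i ∈ Z, ∑ j ∈ Zᶜ, (k i j : ℤ))
        + 1 - nComp k Z - nComp k Zᶜ := by
    simp only [genusOf, hnV]
    rw [hsplit_g, hcard, hsplit_k, ha, hb]
    have h2a : (2 * a) / 2 = a := by omega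
    have h2b : (2 * b) / 2 = b := by omega
    have h2c : (2 * a + 2 * b + 2 * ∑ i ∈ Z, ∑ j ∈ Zᶜ, (k i j : ℤ)) / 2
        = a + b + ∑ i ∈ Z, ∑ j ∈ Zᶜ, (k i j : ℤ) := by omega
    rw [h2a, h2b, h2c]
    push_cast
    ring
  have hss := hd_ss Zᶜ hZc_ne hZc_proper
  have hnZ := nComp_pos k Z hZne
  have hnZ' : (1 : ℤ) ≤ nComp k Z := by exact_mod_cast hnZ
  constructor
  · have : (nComp k Z : ℤ) ≤ 1 := by
      rw [hsplit_d, hgu] at hd_total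
      omega
    have : nComp k Z ≤ 1 := by exact_mod_cast this
    omega
  constructor
  · rw [hsplit_d, hgu] at hd_total
    omega
  · rw [hsplit_d, hgu] at hd_total
    omega
end

section
/- Assume g_i ≥ 1 for all i ∈ ℤ/γℤ. Let ℓ ≥ 1 and let integers satisfy 1 = k_1 < j_1 < k_2 < j_2 < ⋯ < k_ℓ < j_ℓ ≤ γ. Define the multidegree d on C by d_i = g_i − 1 if i ≡ k_r (mod γ) for some r, d_i = g_i + 1 if i ≡ j_r (mod γ) for some r, and d_i = g_i otherwise, and set I^− := {i : d_i = g_i − 1} and I^+ := {i : d_i = g_i + 1}. Then a nonempty proper connected subset Z ⊆ ℤ/γℤ, written as a cyclic arc Z = {a, a+1, …, a+t} with a − 1 ∉ Z, is admissible if and only if Z ∩ (I^+ ∪ I^−) ≠ ∅ and both the first and the last elements of Z ∩ (I^+ ∪ I^−) in the linear order a, a+1, …, a+t belong to I^+. (The characterization of admissible proper subcurves established in the proof of Proposition 4.3 of the paper.) -/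
/-!
Write `δ = d - g`. Around the cycle `δ` is `-1` at the `k r`, `+1` at the `j r` and `0` elsewhere,
and the `k r`, `j r` alternate; hence `δ i = φ (i - 1) - φ i`, where `φ` is the indicator of the
union of the gaps `[k r, j r)`. Along the arc `a, …, a + t` this makes `δ (a + s)` the increment
`h (s + 1) - h s` of the `0/1`-valued sequence `h s = 1 - φ (a + s - 1)`, so the degree of `e` on
any sub-arc telescopes to boundary values of `h`. The degree condition then says `h 0 = 0` and
`h (t + 1) = 1`, which for a `0/1` sequence means exactly that its first and last jumps go up;
conversely these two boundary values bound every telescoped sum from below, which gives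
effectivity and semistability.
-/

open Finset

/-- The number of connected components of the subcurve of a circular curve indexed by `S`:
the number of `i ∈ S` with `i − 1 ∉ S`. -/
def nCirc {γ : ℕ} (S : Finset (ZMod γ)) : ℕ :=
  (S.filter (fun i => i - 1 ∉ S)).card

/-- The multidegree `e` on the subcurve `Z` obtained from `d` by subtracting the points of
intersection of `Z` with its complement: `e i = d i − [i−1 ∉ Z] − [i+1 ∉ Z]`. -/
def eMult {γ : ℕ} (d : ZMod γ → ℤ) (Z : Finset (ZMod γ)) (i : ZMod γ) : ℤ :=
  d i - (if i - 1 ∈ Z then 0 else 1) - (if i + 1 ∈ Z then 0 else 1)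

/-- The genus of the subcurve of the circular curve indexed by `Z`: it is `Σ_{i∈Z} g i`
for proper `Z`, and the total genus `1 + Σ_i g i` for `Z = ℤ/γℤ`. -/
def gSub {γ : ℕ} [NeZero γ] (g : ZMod γ → ℕ) (Z : Finset (ZMod γ)) : ℤ :=
  if Z = Finset.univ then 1 + ∑ i, (g i : ℤ) else ∑ i ∈ Z, (g i : ℤ)

/-- `Z` is admissible for the multidegree `d` if `Z` is nonempty and connected, and the
multidegree `e = eMult d Z` is effective on `Z`, of total degree `g_Z − 1` on `Z`, and
semistable on `Z`. -/
def Admissible {γ : ℕ} [NeZero γ] (g : ZMod γ → ℕ) (d : ZMod γ → ℤ)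
    (Z : Finset (ZMod γ)) : Prop :=
  Z.Nonempty ∧ (Z = Finset.univ ∨ nCirc Z = 1) ∧
    (∀ i ∈ Z, 0 ≤ eMult d Z i) ∧
    (∑ i ∈ Z, eMult d Z i = gSub g Z - 1) ∧
    ∀ Y : Finset (ZMod γ), Y ⊆ Z → Y.Nonempty → Y ≠ Z →
      (∑ i ∈ Y, eMult d Z i) ≥ (∑ i ∈ Y, (g i : ℤ)) - nCirc Y

section Steps

variable {h : ℕ → ℤ} {t : ℕ}

theorem eq_of_forall_step_eq {p q : ℕ} (hpq : p ≤ q)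
    (hstep : ∀ s, p ≤ s → s < q → h (s + 1) = h s) : h q = h p := by
  induction q, hpq using Nat.le_induction with
  | base => rfl
  | succ q hpq ih =>
    rw [hstep q hpq (by omega), ih fun s hs hsq => hstep s hs (by omega)]

theorem ends_zero_one_iff_extreme_steps_up (hh : ∀ s, h s = 0 ∨ h s = 1) :
    (h 0 = 0 ∧ h (t + 1) = 1) ↔
      ∃ s₁ s₂, s₁ ≤ t ∧ s₂ ≤ t ∧ h (s₁ + 1) - h s₁ = 1 ∧ h (s₂ + 1) - h s₂ = 1 ∧
        ∀ s ≤ t, h (s + 1) - h s ≠ 0 → s₁ ≤ s ∧ s ≤ s₂ := by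
  constructor
  · rintro ⟨h0, ht⟩
    set S := (range (t + 1)).filter fun s => h (s + 1) - h s ≠ 0
    have hS : ∀ s, s ∈ S ↔ s ≤ t ∧ h (s + 1) - h s ≠ 0 := by
      simp [S]
    have hSne : S.Nonempty := by
      by_contra hempty
      have := eq_of_forall_step_eq (h := h) (Nat.zero_le (t + 1)) fun s _ hs => by
        by_contra hne
        exact hempty ⟨s, (hS s).2 ⟨by omega, sub_ne_zero.2 hne⟩⟩
      omega
    obtain ⟨hs₁t, hs₁⟩ := (hS _).1 (S.min'_mem hSne)
    obtain ⟨hs₂t, hs₂⟩ := (hS _).1 (S.max'_mem hSne)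
    have before : h (S.min' hSne) = h 0 :=
      eq_of_forall_step_eq (Nat.zero_le _) fun s _ hs => by
        by_contra hne
        exact absurd (S.min'_le s ((hS s).2 ⟨by omega, sub_ne_zero.2 hne⟩)) (by omega)
    have after : h (t + 1) = h (S.max' hSne + 1) :=
      eq_of_forall_step_eq (by omega) fun s hs hst => by
        by_contra hne
        exact absurd (S.le_max' s ((hS s).2 ⟨by omega, sub_ne_zero.2 hne⟩)) (by omega)
    refine ⟨_, _, hs₁t, hs₂t, ?_, ?_, fun s hst hs =>
      ⟨S.min'_le s ((hS s).2 ⟨hst, hs⟩), S.le_max' s ((hS s).2 ⟨hst, hs⟩)⟩⟩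
    · have := hh (S.min' hSne + 1); omega
    · have := hh (S.max' hSne); omega
  · rintro ⟨s₁, s₂, hs₁t, hs₂t, hs₁, hs₂, hext⟩
    have flat : ∀ p q, p ≤ q → (∀ s, p ≤ s → s < q → s ≤ t → ¬(s₁ ≤ s ∧ s ≤ s₂)) →
        q ≤ t + 1 → h q = h p := fun p q hpq hout hq =>
      eq_of_forall_step_eq hpq fun s hps hsq => by
        by_contra hne
        exact hout s hps hsq (by omega) (hext s (by omega) (sub_ne_zero.2 hne))
    have h0 : h s₁ = h 0 := flat 0 s₁ (Nat.zero_le _) (fun s _ hs => by omega) (by omega)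
    have ht : h (t + 1) = h (s₂ + 1) := flat _ _ (by omega) (fun s hs _ => by omega) le_rfl
    have := hh s₁; have := hh (s₁ + 1); have := hh s₂; have := hh (s₂ + 1)
    omega

theorem card_starts_sub_le_sum_steps (hh : ∀ s, h s = 0 ∨ h s = 1) (h0 : h 0 = 0)
    (ht : h (t + 1) = 1) {T : Finset ℕ} (hT : T ⊆ range (t + 1)) :
    (if 0 ∈ T then 1 else 0) + (if t ∈ T then 1 else 0) - (#(T \ T.image (· + 1)) : ℤ) ≤
      ∑ s ∈ T, (h (s + 1) - h s) := by
  have hnonneg : ∀ s, 0 ≤ h s := fun s => by have := hh s; omega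
  have hle_one : ∀ s, 0 ≤ 1 - h s := fun s => by have := hh s; omega
  have telescope : ∑ s ∈ T, (h (s + 1) - h s) =
      ∑ s ∈ T.image (· + 1) \ T, h s - ∑ s ∈ T \ T.image (· + 1), h s := by
    rw [sum_sdiff_sub_sum_sdiff, sum_image fun _ _ _ _ => Nat.add_right_cancel, sum_sub_distrib]
  have ends : (if t ∈ T then 1 else 0) ≤ ∑ s ∈ T.image (· + 1) \ T, h s := by
    split_ifs with htT
    · have hmem : t + 1 ∈ T.image (· + 1) \ T :=
        mem_sdiff.2 ⟨mem_image_of_mem _ htT, fun h' => by simpa using hT h'⟩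
      exact ht ▸ single_le_sum (fun s _ => hnonneg s) hmem
    · exact sum_nonneg fun s _ => hnonneg s
  have starts : (if 0 ∈ T then 1 else 0) ≤ ∑ s ∈ T \ T.image (· + 1), (1 - h s) := by
    split_ifs with h0T
    · have hmem : 0 ∈ T \ T.image (· + 1) := mem_sdiff.2 ⟨h0T, by simp⟩
      simpa [h0] using single_le_sum (fun s _ => hle_one s) hmem
    · exact sum_nonneg fun s _ => hle_one s
  rw [sum_sub_distrib, sum_const, nsmul_one] at starts
  linarith

end Steps

def arc {γ : ℕ} (a : ZMod γ) (T : Finset ℕ) : Finset (ZMod γ) :=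
  T.image fun s : ℕ => a + (s : ZMod γ)

section Arc

variable {γ : ℕ} {a : ZMod γ} {t : ℕ}

theorem add_natCast_injOn (a : ZMod γ) :
    Set.InjOn (fun s : ℕ => a + (s : ZMod γ)) (Set.Iio γ) := fun s hs s' hs' hss' => by
  simpa [ZMod.val_cast_of_lt hs, ZMod.val_cast_of_lt hs'] using
    congrArg ZMod.val (add_left_cancel hss')

theorem lt_of_sub_one_notMem_arc [NeZero γ] (ha : a - 1 ∉ arc a (range (t + 1))) :
    t + 1 < γ := by
  by_contra! hγt
  refine ha (mem_image.2 ⟨γ - 1, mem_range.2 (by omega), ?_⟩)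
  simp [Nat.cast_sub (NeZero.one_le : 1 ≤ γ), sub_eq_add_neg]

theorem add_natCast_mem_arc_iff {T : Finset ℕ} (hT : ∀ s ∈ T, s < γ) {u : ℕ} (hu : u < γ) :
    a + (u : ZMod γ) ∈ arc a T ↔ u ∈ T := by
  refine ⟨fun hmem => ?_, mem_image_of_mem _⟩
  obtain ⟨s, hs, hsu⟩ := mem_image.1 hmem
  exact add_natCast_injOn a (hT s hs) hu hsu ▸ hs

variable [NeZero γ] (ha : a - 1 ∉ arc a (range (t + 1)))
include ha

theorem sub_one_mem_arc_iff {T : Finset ℕ} (hT : T ⊆ range (t + 1)) {s : ℕ} (hs : s ≤ t) :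
    a + (s : ZMod γ) - 1 ∈ arc a T ↔ s ∈ T.image (· + 1) := by
  have htγ := lt_of_sub_one_notMem_arc ha
  have hTγ : ∀ u ∈ T, u < γ := fun u hu => by have := mem_range.1 (hT hu); omega
  rcases Nat.eq_zero_or_pos s with rfl | hs₀
  · simp only [Nat.cast_zero, add_zero]
    exact iff_of_false (fun hmem => ha (image_subset_image hT hmem)) (by simp)
  · have hpred : a + (s : ZMod γ) - 1 = a + ((s - 1 : ℕ) : ZMod γ) := by
      rw [Nat.cast_sub hs₀]; ring
    rw [hpred, add_natCast_mem_arc_iff hTγ (by omega), mem_image]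
    exact ⟨fun hmem => ⟨s - 1, hmem, by omega⟩, by rintro ⟨u, hu, rfl⟩; simpa using hu⟩

theorem eMult_arc {d : ZMod γ → ℤ} {s : ℕ} (hs : s ≤ t) :
    eMult d (arc a (range (t + 1))) (a + s) =
      d (a + s) - (if s = 0 then 1 else 0) - (if s = t then 1 else 0) := by
  have htγ := lt_of_sub_one_notMem_arc ha
  have hrange : ∀ u ∈ range (t + 1), u < γ := fun u hu => by have := mem_range.1 hu; omega
  have hsucc : a + (s : ZMod γ) + 1 = a + ((s + 1 : ℕ) : ZMod γ) := by push_cast; ring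
  have hpred : (∃ u, u < t + 1 ∧ u + 1 = s) ↔ s ≠ 0 :=
    ⟨by rintro ⟨u, -, rfl⟩; omega, fun hs₀ => ⟨s - 1, by omega, by omega⟩⟩
  simp only [eMult, sub_one_mem_arc_iff ha subset_rfl hs, hsucc,
    add_natCast_mem_arc_iff hrange (show s + 1 < γ by omega), mem_image, hpred, mem_range]
  split_ifs <;> omega

theorem nCirc_arc {T : Finset ℕ} (hT : T ⊆ range (t + 1)) :
    nCirc (arc a T) = #(T \ T.image (· + 1)) := by
  have htγ := lt_of_sub_one_notMem_arc ha
  have hTt : ∀ u ∈ T, u ≤ t := fun u hu => by have := mem_range.1 (hT hu); omega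
  rw [nCirc, arc, filter_image, card_image_of_injOn, sdiff_eq_filter]
  · exact congrArg card
      (filter_congr fun s hs => by rw [← arc, sub_one_mem_arc_iff ha hT (hTt s hs)])
  · exact (add_natCast_injOn a).mono fun u hu =>
      Set.mem_Iio.2 (by have := hTt u (mem_filter.1 hu).1; omega)

end Arc

theorem exists_eq_arc_of_subset_arc {γ : ℕ} {a : ZMod γ} {S : Finset ℕ} {Y : Finset (ZMod γ)}
    (hY : Y ⊆ arc a S) : ∃ T ⊆ S, Y = arc a T := by
  refine ⟨S.filter fun s => a + (s : ZMod γ) ∈ Y, filter_subset _ _, ?_⟩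
  ext i
  simp only [arc, mem_image, mem_filter]
  refine ⟨fun hi => ?_, by rintro ⟨s, ⟨-, hs⟩, rfl⟩; exact hs⟩
  obtain ⟨s, hs, rfl⟩ := mem_image.1 (hY hi)
  exact ⟨s, ⟨hs, hi⟩, rfl⟩

section AdmissibleArc

variable {γ : ℕ} [NeZero γ] {a : ZMod γ} {t : ℕ} {g : ZMod γ → ℕ} {d : ZMod γ → ℤ} {h : ℕ → ℤ}
  (ha : a - 1 ∉ arc a (range (t + 1)))
  (hd : ∀ s ≤ t, d (a + s) = g (a + s) + (h (s + 1) - h s))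
include ha hd

theorem sum_eMult_arc {T : Finset ℕ} (hT : T ⊆ range (t + 1)) :
    ∑ i ∈ arc a T, eMult d (arc a (range (t + 1))) i =
      ∑ i ∈ arc a T, (g i : ℤ) + ∑ s ∈ T, (h (s + 1) - h s) -
        (if 0 ∈ T then 1 else 0) - (if t ∈ T then 1 else 0) := by
  have hTt : ∀ s ∈ T, s ≤ t := fun s hs => by have := mem_range.1 (hT hs); omega
  have hinj : Set.InjOn (fun s : ℕ => a + (s : ZMod γ)) T := (add_natCast_injOn a).mono
    fun s hs => Set.mem_Iio.2 (by have := lt_of_sub_one_notMem_arc ha; have := hTt s hs; omega)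
  rw [arc, sum_image hinj, sum_image hinj,
    sum_congr rfl fun s hs => by rw [eMult_arc ha (hTt s hs), hd s (hTt s hs)]]
  simp only [sum_sub_distrib, sum_add_distrib, sum_ite_eq']

theorem admissible_arc_iff (hg : ∀ i, 1 ≤ g i) (hh : ∀ s, h s = 0 ∨ h s = 1) :
    Admissible g d (arc a (range (t + 1))) ↔ h 0 = 0 ∧ h (t + 1) = 1 := by
  have hne : arc a (range (t + 1)) ≠ univ := fun huniv => ha (huniv ▸ mem_univ _)
  have hdeg : (∑ i ∈ arc a (range (t + 1)), eMult d (arc a (range (t + 1))) i =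
      gSub g (arc a (range (t + 1))) - 1) ↔ h 0 = 0 ∧ h (t + 1) = 1 := by
    rw [gSub, if_neg hne, sum_eMult_arc ha hd subset_rfl, sum_range_sub]
    have := hh 0; have := hh (t + 1)
    simp only [mem_range]
    split_ifs <;> omega
  refine ⟨fun hadm => hdeg.1 hadm.2.2.2.1, fun hends => ⟨⟨a, ?_⟩, Or.inr ?_, ?_, hdeg.2 hends, ?_⟩⟩
  · exact mem_image.2 ⟨0, by simp⟩
  · rw [nCirc_arc ha subset_rfl]
    refine card_eq_one.2 ⟨0, ?_⟩
    ext s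
    simp only [mem_sdiff, mem_range, mem_image, mem_singleton, not_exists, not_and]
    exact ⟨fun ⟨hs, hnot⟩ => by by_contra hs₀; exact hnot (s - 1) (by omega) (by omega),
      by rintro rfl; exact ⟨by omega, fun x _ => by omega⟩⟩
  · intro i hi
    obtain ⟨s, hs, rfl⟩ := mem_image.1 hi
    have hst : s ≤ t := by have := mem_range.1 hs; omega
    rw [eMult_arc ha hst, hd s hst]
    have := hg (a + s); have := hh s; have := hh (s + 1)
    split_ifs <;> subst_vars <;> omega
  · intro Y hY _ _
    obtain ⟨T, hT, rfl⟩ := exists_eq_arc_of_subset_arc hY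
    rw [sum_eMult_arc ha hd hT, nCirc_arc ha hT]
    have := card_starts_sub_le_sum_steps hh hends.1 hends.2 hT
    linarith

end AdmissibleArc

def Covered (ℓ : ℕ) (k j : ℕ → ℕ) (x : ℕ) : Prop :=
  ∃ r ∈ Icc 1 ℓ, k r ≤ x ∧ x < j r

instance (ℓ : ℕ) (k j : ℕ → ℕ) : DecidablePred (Covered ℓ k j) :=
  fun _ => inferInstanceAs (Decidable (∃ r ∈ Icc 1 ℓ, _))

section Covered

variable {ℓ : ℕ} {k j : ℕ → ℕ} (hkj : ∀ r, 1 ≤ r → r ≤ ℓ → k r < j r)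
  (hjk : ∀ r, 1 ≤ r → r < ℓ → j r < k (r + 1))
include hkj hjk

theorem j_lt_k_of_lt {r r' : ℕ} (hr : 1 ≤ r) (hrr' : r < r') (hr' : r' ≤ ℓ) : j r < k r' := by
  induction r', hrr' using Nat.le_induction with
  | base => exact hjk r hr hr'
  | succ r' hrr' ih =>
    have := ih (by omega); have := hkj r' (by omega) (by omega); have := hjk r' (by omega) hr'
    omega

theorem not_covered_j {r : ℕ} (hr : r ∈ Icc 1 ℓ) : ¬Covered ℓ k j (j r) := by
  rintro ⟨r', hr', hkr', hjr'⟩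
  rw [mem_Icc] at hr hr'
  rcases lt_trichotomy r r' with hlt | rfl | hlt
  · have := j_lt_k_of_lt hkj hjk hr.1 hlt hr'.2; omega
  · omega
  · have := j_lt_k_of_lt hkj hjk hr'.1 hlt hr.2; have := hkj r hr.1 hr.2; omega

theorem not_covered_k_sub_one {r : ℕ} (hr : r ∈ Icc 1 ℓ) (hk : 1 ≤ k r) :
    ¬Covered ℓ k j (k r - 1) := by
  rintro ⟨r', hr', hkr', hjr'⟩
  rw [mem_Icc] at hr hr'
  rcases lt_trichotomy r r' with hlt | rfl | hlt
  · have := j_lt_k_of_lt hkj hjk hr.1 hlt hr'.2; have := hkj r hr.1 hr.2; omega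
  · omega
  · have := j_lt_k_of_lt hkj hjk hr'.1 hlt hr.2; omega

theorem one_le_k_lt_j_le {γ : ℕ} (hk1 : 1 ≤ k 1) (hjγ : j ℓ ≤ γ) {r : ℕ} (hr : r ∈ Icc 1 ℓ) :
    1 ≤ k r ∧ k r < j r ∧ j r ≤ γ := by
  rw [mem_Icc] at hr
  refine ⟨?_, hkj r hr.1 hr.2, ?_⟩
  · rcases hr.1.eq_or_lt with rfl | h1r
    · exact hk1
    · have := j_lt_k_of_lt hkj hjk le_rfl h1r hr.2; omega
  · rcases hr.2.eq_or_lt with rfl | hrℓ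
    · exact hjγ
    · have := j_lt_k_of_lt hkj hjk hr.1 hrℓ le_rfl; have := hkj ℓ (by omega) le_rfl; omega

end Covered

theorem covered_sub_one_iff {ℓ : ℕ} {k j : ℕ → ℕ} {x : ℕ} (hk : ∀ r ∈ Icc 1 ℓ, x ≠ k r)
    (hj : ∀ r ∈ Icc 1 ℓ, x ≠ j r) : Covered ℓ k j (x - 1) ↔ Covered ℓ k j x :=
  exists_congr fun r => and_congr_right fun hr => by have := hk r hr; have := hj r hr; omega

theorem natCast_injOn_Icc (γ : ℕ) : Set.InjOn (Nat.cast : ℕ → ZMod γ) (Set.Icc 1 γ) :=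
  fun x ⟨hx1, hxγ⟩ y ⟨hy1, hyγ⟩ hxy => by
    have hpred : (1 : ZMod γ) + ((x - 1 : ℕ) : ZMod γ) = 1 + ((y - 1 : ℕ) : ZMod γ) := by
      rwa [Nat.cast_sub hx1, Nat.cast_sub hy1, Nat.cast_one, add_sub_cancel, add_sub_cancel]
    have := add_natCast_injOn (1 : ZMod γ) (show x - 1 < γ by omega) (show y - 1 < γ by omega)
      hpred
    omega

theorem exists_natCast_eq_of_val_sub_one {γ : ℕ} [NeZero γ] (i : ZMod γ) :
    ∃ x ∈ Set.Icc 1 γ, (x : ZMod γ) = i ∧ (i - 1).val = x - 1 :=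
  ⟨(i - 1).val + 1, ⟨by omega, ZMod.val_lt _⟩, by simp, by omega⟩

theorem sub_eq_covered_sub {γ : ℕ} [NeZero γ] {g : ZMod γ → ℕ} {d : ZMod γ → ℤ} {ℓ : ℕ}
    {k j : ℕ → ℕ} (hk1 : 1 ≤ k 1) (hkj : ∀ r, 1 ≤ r → r ≤ ℓ → k r < j r)
    (hjk : ∀ r, 1 ≤ r → r < ℓ → j r < k (r + 1)) (hjγ : j ℓ ≤ γ)
    (hdk : ∀ r, 1 ≤ r → r ≤ ℓ → d ((k r : ZMod γ)) = (g ((k r : ZMod γ)) : ℤ) - 1)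
    (hdj : ∀ r, 1 ≤ r → r ≤ ℓ → d ((j r : ZMod γ)) = (g ((j r : ZMod γ)) : ℤ) + 1)
    (hdo : ∀ i : ZMod γ, (¬ ∃ r, 1 ≤ r ∧ r ≤ ℓ ∧ i = (k r : ZMod γ)) →
      (¬ ∃ r, 1 ≤ r ∧ r ≤ ℓ ∧ i = (j r : ZMod γ)) → d i = (g i : ℤ))
    (i : ZMod γ) :
    d i - g i = (if Covered ℓ k j (i - 1).val then 1 else 0) -
      (if Covered ℓ k j i.val then 1 else 0) := by
  have hbounds := fun r (hr : r ∈ Icc 1 ℓ) => one_le_k_lt_j_le hkj hjk hk1 hjγ hr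
  obtain ⟨x, hx, rfl, hprev⟩ := exists_natCast_eq_of_val_sub_one i
  have hcur : Covered ℓ k j (x % γ) ↔ Covered ℓ k j x := by
    rcases hx.2.lt_or_eq with hlt | rfl
    · rw [Nat.mod_eq_of_lt hlt]
    · rw [Nat.mod_self]
      exact iff_of_false (fun ⟨r, hr, hkr, _⟩ => by have := hbounds r hr; omega)
        fun ⟨r, hr, _, hjr⟩ => by have := hbounds r hr; omega
  rw [hprev, ZMod.val_natCast, if_congr hcur rfl rfl]
  by_cases hJ : ∃ r ∈ Icc 1 ℓ, x = j r
  · obtain ⟨r, hr, rfl⟩ := hJ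
    rw [hdj r (mem_Icc.1 hr).1 (mem_Icc.1 hr).2,
      if_pos ⟨r, hr, by have := hbounds r hr; omega, by have := hbounds r hr; omega⟩,
      if_neg (not_covered_j hkj hjk hr)]
    ring
  by_cases hK : ∃ r ∈ Icc 1 ℓ, x = k r
  · obtain ⟨r, hr, rfl⟩ := hK
    rw [hdk r (mem_Icc.1 hr).1 (mem_Icc.1 hr).2,
      if_neg (not_covered_k_sub_one hkj hjk hr (hbounds r hr).1),
      if_pos ⟨r, hr, le_rfl, (hbounds r hr).2.1⟩]
    ring
  push Not at hJ hK
  have hcast : ∀ m : ℕ → ℕ, (∀ r ∈ Icc 1 ℓ, 1 ≤ m r ∧ m r ≤ γ) → (∀ r ∈ Icc 1 ℓ, x ≠ m r) →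
      ¬ ∃ r, 1 ≤ r ∧ r ≤ ℓ ∧ (x : ZMod γ) = (m r : ZMod γ) := by
    rintro m hm hxm ⟨r, h1r, hrℓ, hxr⟩
    have hr : r ∈ Icc 1 ℓ := mem_Icc.2 ⟨h1r, hrℓ⟩
    exact hxm r hr (natCast_injOn_Icc γ hx (hm r hr) hxr)
  rw [hdo _ (hcast k (fun r hr => by have := hbounds r hr; omega) hK)
    (hcast j (fun r hr => by have := hbounds r hr; omega) hJ),
    sub_self, if_congr (covered_sub_one_iff hK hJ) rfl rfl, sub_self]

theorem circular_admissible_arc_iff_general (γ : ℕ) [NeZero γ]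
    (g : ZMod γ → ℕ) (hg : ∀ i, 1 ≤ g i)
    (ℓ : ℕ) (k j : ℕ → ℕ)
    (hk1 : k 1 = 1)
    (hkj : ∀ r, 1 ≤ r → r ≤ ℓ → k r < j r)
    (hjk : ∀ r, 1 ≤ r → r < ℓ → j r < k (r + 1))
    (hjγ : j ℓ ≤ γ)
    (d : ZMod γ → ℤ)
    (hdk : ∀ r, 1 ≤ r → r ≤ ℓ → d ((k r : ZMod γ)) = (g ((k r : ZMod γ)) : ℤ) - 1)
    (hdj : ∀ r, 1 ≤ r → r ≤ ℓ → d ((j r : ZMod γ)) = (g ((j r : ZMod γ)) : ℤ) + 1)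
    (hdo : ∀ i : ZMod γ, (¬ ∃ r, 1 ≤ r ∧ r ≤ ℓ ∧ i = (k r : ZMod γ)) →
      (¬ ∃ r, 1 ≤ r ∧ r ≤ ℓ ∧ i = (j r : ZMod γ)) → d i = (g i : ℤ))
    (a : ZMod γ) (t : ℕ)
    (Z : Finset (ZMod γ))
    (hZ : Z = (Finset.range (t + 1)).image (fun s : ℕ => a + (s : ZMod γ)))
    (ha : a - 1 ∉ Z) :
    Admissible g d Z ↔
      ∃ s₁ s₂ : ℕ, s₁ ≤ t ∧ s₂ ≤ t ∧
        d (a + (s₁ : ZMod γ)) = (g (a + (s₁ : ZMod γ)) : ℤ) + 1 ∧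
        d (a + (s₂ : ZMod γ)) = (g (a + (s₂ : ZMod γ)) : ℤ) + 1 ∧
        ∀ s : ℕ, s ≤ t →
          (d (a + (s : ZMod γ)) = (g (a + (s : ZMod γ)) : ℤ) + 1 ∨
            d (a + (s : ZMod γ)) = (g (a + (s : ZMod γ)) : ℤ) - 1) →
          s₁ ≤ s ∧ s ≤ s₂ := by
  obtain rfl : Z = arc a (range (t + 1)) := hZ
  set h : ℕ → ℤ := fun s => if Covered ℓ k j (a + s - 1).val then 0 else 1
  have hh : ∀ s, h s = 0 ∨ h s = 1 := fun s => by simp only [h]; split_ifs <;> simp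
  have hd : ∀ s : ℕ, d (a + s) = g (a + s) + (h (s + 1) - h s) := fun s => by
    have hjump := sub_eq_covered_sub hk1.ge hkj hjk hjγ hdk hdj hdo (a + s)
    have hsucc : a + ((s + 1 : ℕ) : ZMod γ) - 1 = a + s := by push_cast; ring
    simp only [h, hsucc]
    split_ifs at hjump ⊢ <;> linarith
  have hup : ∀ s : ℕ, d (a + s) = g (a + s) + 1 ↔ h (s + 1) - h s = 1 := fun s => by
    rw [hd]; omega
  have hstep : ∀ s : ℕ, (d (a + s) = g (a + s) + 1 ∨ d (a + s) = g (a + s) - 1) ↔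
      h (s + 1) - h s ≠ 0 := fun s => by
    rw [hd]; have := hh s; have := hh (s + 1); omega
  rw [admissible_arc_iff ha (fun s _ => hd s) hg hh, ends_zero_one_iff_extreme_steps_up hh]
  simp only [hstep]
  simp only [hup]

/-- The characterization of admissible proper subcurves established in the proof of
Proposition 4.3: a nonempty proper cyclic arc `Z = {a, a+1, …, a+t}` (with `a − 1 ∉ Z`) is
admissible if and only if `Z` meets `I⁺ ∪ I⁻` and both the first and the last elements of
`Z ∩ (I⁺ ∪ I⁻)` in the linear order `a, a+1, …, a+t` belong to `I⁺`. -/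
theorem circular_admissible_arc_iff (γ : ℕ) [NeZero γ] (hγ : 3 ≤ γ)
    (g : ZMod γ → ℕ) (hg : ∀ i, 1 ≤ g i)
    (ℓ : ℕ) (hℓ : 1 ≤ ℓ) (k j : ℕ → ℕ)
    (hk1 : k 1 = 1)
    (hkj : ∀ r, 1 ≤ r → r ≤ ℓ → k r < j r)
    (hjk : ∀ r, 1 ≤ r → r < ℓ → j r < k (r + 1))
    (hjγ : j ℓ ≤ γ)
    (d : ZMod γ → ℤ)
    (hdk : ∀ r, 1 ≤ r → r ≤ ℓ → d ((k r : ZMod γ)) = (g ((k r : ZMod γ)) : ℤ) - 1)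
    (hdj : ∀ r, 1 ≤ r → r ≤ ℓ → d ((j r : ZMod γ)) = (g ((j r : ZMod γ)) : ℤ) + 1)
    (hdo : ∀ i : ZMod γ, (¬ ∃ r, 1 ≤ r ∧ r ≤ ℓ ∧ i = (k r : ZMod γ)) →
      (¬ ∃ r, 1 ≤ r ∧ r ≤ ℓ ∧ i = (j r : ZMod γ)) → d i = (g i : ℤ))
    (a : ZMod γ) (t : ℕ)
    (Z : Finset (ZMod γ))
    (hZ : Z = (Finset.range (t + 1)).image (fun s : ℕ => a + (s : ZMod γ)))
    (ha : a - 1 ∉ Z) :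
    Admissible g d Z ↔
      ∃ s₁ s₂ : ℕ, s₁ ≤ t ∧ s₂ ≤ t ∧
        d (a + (s₁ : ZMod γ)) = (g (a + (s₁ : ZMod γ)) : ℤ) + 1 ∧
        d (a + (s₂ : ZMod γ)) = (g (a + (s₂ : ZMod γ)) : ℤ) + 1 ∧
        ∀ s : ℕ, s ≤ t →
          (d (a + (s : ZMod γ)) = (g (a + (s : ZMod γ)) : ℤ) + 1 ∨
            d (a + (s : ZMod γ)) = (g (a + (s : ZMod γ)) : ℤ) - 1) →
          s₁ ≤ s ∧ s ≤ s₂ :=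
  circular_admissible_arc_iff_general γ g hg ℓ k j hk1 hkj hjk hjγ d hdk hdj hdo a t Z hZ ha
end
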